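/- arXiv:1710.02063 — 2 statements merged into one kernel-verified Lean document; each statement's English description precedes it below -/
import Mathlib

section
/- If there exists a c-compatible order of A_c, then the factorization poset P_c is locally Hurwitz-connected, i.e., for every g ≤_A c with ℓ_A(g) = 2 the braid group B₂ acts transitively on Red_A(g). -/
variable {G : Type*} [Group G]

/-- `A` generates `G` as a monoid. -/
def GeneratesM (A : Set G) : Prop :=
  ∀ x : G, ∃ l : List G, (∀ a ∈ l, a ∈ A) ∧ l.prod = x

/-- `A` is closed under `G`-conjugation. -/
def ConjClosed (A : Set G) : Prop :=
  ∀ g a : G, a ∈ A → g * a * g⁻¹ ∈ A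

/-- The `A`-length of `x`: minimal number of factors from `A` needed to write `x`. -/
noncomputable def lenA (A : Set G) (x : G) : ℕ :=
  sInf {n : ℕ | ∃ l : List G, (∀ a ∈ l, a ∈ A) ∧ l.prod = x ∧ l.length = n}

/-- The `A`-prefix order. -/
def leA (A : Set G) (x y : G) : Prop :=
  lenA A x + lenA A (x⁻¹ * y) = lenA A y

/-- The set of reduced `A`-factorizations of `x`, as lists. -/
def RedA (A : Set G) (x : G) : Set (List G) :=
  {l : List G | (∀ a ∈ l, a ∈ A) ∧ l.prod = x ∧ l.length = lenA A x}

/-- `A_c`: the generators occurring below `c`. -/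
def Ac (A : Set G) (c : G) : Set G := {a : G | a ∈ A ∧ leA A a c}

/-- A single Hurwitz move on factorizations. -/
def HurwitzMove : List G → List G → Prop := fun l m =>
  ∃ (p s : List G) (a b : G),
    l = p ++ a :: b :: s ∧ m = p ++ b :: (b⁻¹ * a * b) :: s

/-- `r` is a linear order on the set `S`. -/
def IsLinearOrderOn (S : Set G) (r : G → G → Prop) : Prop :=
  (∀ a ∈ S, r a a) ∧
  (∀ a ∈ S, ∀ b ∈ S, r a b → r b a → a = b) ∧
  (∀ a ∈ S, ∀ b ∈ S, ∀ c ∈ S, r a b → r b c → r a c) ∧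
  (∀ a ∈ S, ∀ b ∈ S, r a b ∨ r b a)

/-- `r` is a `c`-compatible order: every length-2 element below `c` has a unique
rising reduced factorization. -/
def CompatibleOrder (A : Set G) (c : G) (r : G → G → Prop) : Prop :=
  ∀ g : G, leA A g c → lenA A g = 2 →
    ∃! l : List G, l ∈ RedA A g ∧ l.Chain' r

/-- Two factorizations correspond to maximal chains differing in exactly one element. -/
def ChainAdj (l m : List G) : Prop :=
  l ≠ m ∧ ∃ (p s : List G) (a b a' b' : G),
    l = p ++ a :: b :: s ∧ m = p ++ a' :: b' :: s ∧ a * b = a' * b'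

/-- Covering relation in the graded factorization poset. -/
def CoversA (A : Set G) (x y : G) : Prop := leA A x y ∧ lenA A y = lenA A x + 1

/-- `F_≺(a; g)`: upper covers of the atom `a` in `P_g` that also cover a strictly
smaller atom. -/
def Fset (A : Set G) (r : G → G → Prop) (a g : G) : Set G :=
  {h : G | CoversA A a h ∧ leA A h g ∧
    ∃ a' ∈ A, a' ≠ a ∧ r a' a ∧ CoversA A a' h}

/-- `P_c` is well-covered with respect to `r`. -/
def WellCovered (A : Set G) (c : G) (r : G → G → Prop) : Prop :=
  ∀ a ∈ A, leA A a c →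
    (Fset A r a c = ∅ ↔ ∀ b ∈ A, leA A b c → r a b)

/-- `P_c` is totally well-covered with respect to `r`. -/
def TotallyWellCovered (A : Set G) (c : G) (r : G → G → Prop) : Prop :=
  ∀ g : G, leA A g c → WellCovered A g r

/-!
A reduced factorization `[a, b]` of `g` that is not rising has `b ≺ a`, and the Hurwitz move
sends it to `[b, b⁻¹ * a * b]`, whose first letter is strictly smaller. The letters of
factorizations of `g ≤ c` lie in `A_c`, which is finite because its nontrivial elements are
first letters of reduced factorizations of `c`. So the descent stops, necessarily at the unique
rising factorization, and every element of `Red_A(g)` lies in its Hurwitz orbit.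
-/

section Factorizations

variable {A : Set G}

theorem exists_mem_redA (hgen : GeneratesM A) (x : G) : ∃ l, l ∈ RedA A x := by
  obtain ⟨l, hl, hprod⟩ := hgen x
  exact Nat.sInf_mem
    (s := {n | ∃ l : List G, (∀ a ∈ l, a ∈ A) ∧ l.prod = x ∧ l.length = n})
    ⟨l.length, l, hl, hprod, rfl⟩

theorem lenA_le_length {x : G} {l : List G} (hl : ∀ a ∈ l, a ∈ A) (hprod : l.prod = x) :
    lenA A x ≤ l.length :=
  Nat.sInf_le ⟨l, hl, hprod, rfl⟩

theorem lenA_mul_le (hgen : GeneratesM A) (x y : G) :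
    lenA A (x * y) ≤ lenA A x + lenA A y := by
  obtain ⟨lx, hx, hxprod, hxlen⟩ := exists_mem_redA hgen x
  obtain ⟨ly, hy, hyprod, hylen⟩ := exists_mem_redA hgen y
  rw [← hxlen, ← hylen, ← List.length_append]
  refine lenA_le_length (fun a ha => ?_) (by rw [List.prod_append, hxprod, hyprod])
  exact (List.mem_append.mp ha).elim (hx a) (hy a)

theorem leA_trans (hgen : GeneratesM A) {x y z : G} (hxy : leA A x y) (hyz : leA A y z) :
    leA A x z := by
  have hxz : lenA A (x⁻¹ * z) ≤ lenA A (x⁻¹ * y) + lenA A (y⁻¹ * z) := by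
    simpa [mul_assoc] using lenA_mul_le hgen (x⁻¹ * y) (y⁻¹ * z)
  have hz : lenA A z ≤ lenA A x + lenA A (x⁻¹ * z) := by
    simpa using lenA_mul_le hgen x (x⁻¹ * z)
  unfold leA at *
  omega

theorem eq_one_of_lenA_eq_zero (hgen : GeneratesM A) {x : G} (hx : lenA A x = 0) : x = 1 := by
  obtain ⟨l, -, hprod, hlen⟩ := exists_mem_redA hgen x
  rw [hx, List.length_eq_zero_iff] at hlen
  rw [← hprod, hlen, List.prod_nil]

theorem leA_prod_of_append_mem_redA (hgen : GeneratesM A) {p s : List G} {x : G}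
    (h : p ++ s ∈ RedA A x) : leA A p.prod x := by
  obtain ⟨hmem, hprod, hlen⟩ := h
  have hp : lenA A p.prod ≤ p.length :=
    lenA_le_length (fun a ha => hmem a (List.mem_append_left s ha)) rfl
  have hs : lenA A s.prod ≤ s.length :=
    lenA_le_length (fun a ha => hmem a (List.mem_append_right p ha)) rfl
  have hx : lenA A x ≤ lenA A p.prod + lenA A s.prod := by
    rw [← hprod, List.prod_append]
    exact lenA_mul_le hgen _ _
  have hquot : p.prod⁻¹ * x = s.prod := by rw [← hprod, List.prod_append, inv_mul_cancel_left]
  rw [List.length_append] at hlen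
  unfold leA
  rw [hquot]
  omega

theorem finite_ac (hgen : GeneratesM A) {c : G} (hfin : (RedA A c).Finite) :
    (Ac A c).Finite := by
  refine ((hfin.image fun l => l.headD 1).insert 1).subset ?_
  rintro a ⟨haA, hac⟩
  have ha : lenA A a ≤ 1 := lenA_le_length (l := [a]) (by simpa using haA) (by simp)
  obtain ha0 | ha1 : lenA A a = 0 ∨ lenA A a = 1 := by omega
  · exact Or.inl (eq_one_of_lenA_eq_zero hgen ha0)
  · obtain ⟨m, hm, hmprod, hmlen⟩ := exists_mem_redA hgen (a⁻¹ * c)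
    refine Or.inr ⟨a :: m, ⟨?_, ?_, ?_⟩, rfl⟩
    · exact List.forall_mem_cons.mpr ⟨haA, hm⟩
    · rw [List.prod_cons, hmprod, mul_inv_cancel_left]
    · rw [List.length_cons, hmlen, ← hac, ha1, add_comm]

theorem HurwitzMove.mem_redA (hconj : ConjClosed A) {l m : List G} (hlm : HurwitzMove l m)
    {x : G} (hl : l ∈ RedA A x) : m ∈ RedA A x := by
  obtain ⟨p, s, a, b, rfl, rfl⟩ := hlm
  obtain ⟨hmem, hprod, hlen⟩ := hl
  simp only [List.mem_append, List.mem_cons] at hmem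
  refine ⟨?_, ?_, by simpa using hlen⟩
  · intro y hy
    simp only [List.mem_append, List.mem_cons] at hy
    rcases hy with hy | rfl | rfl | hy
    · exact hmem y (.inl hy)
    · exact hmem y (.inr (.inr (.inl rfl)))
    · simpa using hconj b⁻¹ a (hmem a (.inr (.inl rfl)))
    · exact hmem y (.inr (.inr (.inr hy)))
  · rw [← hprod]
    simp [List.prod_append, mul_assoc]

theorem mem_ac_of_pair_mem_redA (hgen : GeneratesM A) (hconj : ConjClosed A) {a b g c : G}
    (hab : [a, b] ∈ RedA A g) (hgc : leA A g c) : a ∈ Ac A c ∧ b ∈ Ac A c := by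
  have hba : [b, b⁻¹ * a * b] ∈ RedA A g :=
    HurwitzMove.mem_redA hconj ⟨[], [], a, b, rfl, rfl⟩ hab
  have hag : leA A a g := by simpa using leA_prod_of_append_mem_redA hgen (p := [a]) hab
  have hbg : leA A b g := by simpa using leA_prod_of_append_mem_redA hgen (p := [b]) hba
  exact ⟨⟨hab.1 a (by simp), leA_trans hgen hag hgc⟩,
    ⟨hab.1 b (by simp), leA_trans hgen hbg hgc⟩⟩

end Factorizations

theorem ncard_strictLower_lt {α : Type*} {S : Set α} (hS : S.Finite) {r : α → α → Prop}
    (htrans : ∀ a ∈ S, ∀ b ∈ S, ∀ c ∈ S, r a b → r b c → r a c) {a b : α}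
    (ha : a ∈ S) (hb : b ∈ S) (hba : r b a) (hab : ¬ r a b) :
    {x ∈ S | r x b ∧ x ≠ b}.ncard < {x ∈ S | r x a ∧ x ≠ a}.ncard := by
  refine Set.ncard_lt_ncard ⟨?_, fun hsub => (hsub ⟨hb, hba, ?_⟩).2.2 rfl⟩
    (hS.subset fun x hx => hx.1)
  · rintro x ⟨hx, hxb, -⟩
    exact ⟨hx, htrans x hx b hb a ha hxb hba, by rintro rfl; exact hab hxb⟩
  · rintro rfl
    exact hab hba

theorem eqvGen_hurwitzMove_of_rising_unique {A : Set G} (hconj : ConjClosed A) {S : Set G}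
    (hS : S.Finite) {r : G → G → Prop}
    (htrans : ∀ a ∈ S, ∀ b ∈ S, ∀ c ∈ S, r a b → r b c → r a c)
    (htot : ∀ a ∈ S, ∀ b ∈ S, r a b ∨ r b a) {g : G}
    (hS_mem : ∀ a b, [a, b] ∈ RedA A g → a ∈ S ∧ b ∈ S) {l₀ : List G}
    (huniq : ∀ a b, [a, b] ∈ RedA A g → r a b → [a, b] = l₀) {a b : G}
    (hab : [a, b] ∈ RedA A g) : Relation.EqvGen HurwitzMove [a, b] l₀ := by
  induction hn : {x ∈ S | r x a ∧ x ≠ a}.ncard using Nat.strong_induction_on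
    generalizing a b with | _ n ih
  obtain ⟨ha, hb⟩ := hS_mem a b hab
  by_cases hr : r a b
  · rw [huniq a b hab hr]
    exact .refl _
  · have hmove : HurwitzMove [a, b] [b, b⁻¹ * a * b] := ⟨[], [], a, b, rfl, rfl⟩
    have hlt := ncard_strictLower_lt hS htrans ha hb ((htot a ha b hb).resolve_left hr) hr
    exact .trans _ _ _ (.rel _ _ hmove) (ih _ (hn ▸ hlt) (hmove.mem_redA hconj hab) rfl)

theorem compatible_implies_locally_hurwitz_connected (A : Set G)
    (hgen : GeneratesM A) (hconj : ConjClosed A) (c : G)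
    (hfin : (RedA A c).Finite)
    (hex : ∃ r : G → G → Prop, IsLinearOrderOn (Ac A c) r ∧ CompatibleOrder A c r) :
    ∀ g : G, leA A g c → lenA A g = 2 →
      ∀ l ∈ RedA A g, ∀ m ∈ RedA A g, Relation.EqvGen HurwitzMove l m := by
  obtain ⟨r, ⟨-, -, htrans, htot⟩, hcomp⟩ := hex
  intro g hgc hg2
  obtain ⟨l₀, -, huniq⟩ := hcomp g hgc hg2
  have hconnected : ∀ l ∈ RedA A g, Relation.EqvGen HurwitzMove l l₀ := by
    intro l hl
    obtain ⟨a, b, rfl⟩ := List.length_eq_two.mp (hl.2.2.trans hg2)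
    exact eqvGen_hurwitzMove_of_rising_unique hconj (finite_ac hgen hfin) htrans htot
      (fun a b h => mem_ac_of_pair_mem_redA hgen hconj h hgc)
      (fun a b h hr => huniq _ ⟨h, List.isChain_pair.mpr hr⟩) hl
  intro l hl m hm
  exact (hconnected l hl).trans _ _ _ (hconnected m hm).symm
end

section
/- Let c ∈ G with ℓ_A(c) = n and Red_A(c) finite. If the factorization poset P_c is chain-connected and locally Hurwitz-connected, then the braid group B_n acts transitively on Red_A(c) (P_c is Hurwitz-connected). -/
variable {G : Type*} [Group G]

/-!
Two maximal chains that differ in exactly one element correspond to reduced factorizations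
`p ++ [a, b] ++ s` and `p ++ [a', b'] ++ s` with `a * b = a' * b'`. Since `A` is closed under
conjugation, any consecutive block of a reduced factorization of `c` is a reduced factorization of
an element below `c`; so `[a, b]` and `[a', b']` are reduced factorizations of a length-2 element
`g ≤_A c`, local Hurwitz-connectivity relates them, and the relating moves act inside `p ++ _ ++ s`.
Chain-connectivity then chains these steps together.
-/

section Factorizations

variable {A : Set G}

lemma lenA_prod_le_length {l : List G} (hl : ∀ a ∈ l, a ∈ A) : lenA A l.prod ≤ l.length :=
  Nat.sInf_le ⟨l, hl, rfl, rfl⟩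

lemma exists_mem_redA_prod {l : List G} (hl : ∀ a ∈ l, a ∈ A) : ∃ m, m ∈ RedA A l.prod :=
  Nat.sInf_mem (s := {n | ∃ m : List G, (∀ a ∈ m, a ∈ A) ∧ m.prod = l.prod ∧ m.length = n})
    ⟨l.length, l, hl, rfl, rfl⟩

lemma lenA_prod_mul_prod_le {l m : List G} (hl : ∀ a ∈ l, a ∈ A) (hm : ∀ a ∈ m, a ∈ A) :
    lenA A (l.prod * m.prod) ≤ lenA A l.prod + lenA A m.prod := by
  obtain ⟨l', hl'A, hl'prod, hl'len⟩ := exists_mem_redA_prod hl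
  obtain ⟨m', hm'A, hm'prod, hm'len⟩ := exists_mem_redA_prod hm
  have hA : ∀ a ∈ l' ++ m', a ∈ A := by
    simpa only [List.mem_append, or_imp, forall_and] using And.intro hl'A hm'A
  simpa [hl'prod, hm'prod, hl'len, hm'len] using lenA_prod_le_length hA

/-- Pulling the block `q` to the front of `p ++ q ++ s` conjugates the factors of `p` by
`q.prod⁻¹`. -/
lemma exists_length_eq_prod_eq_inv_prod_mul (hconj : ConjClosed A) {p s : List G}
    (hp : ∀ a ∈ p, a ∈ A) (hs : ∀ a ∈ s, a ∈ A) (q : List G) :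
    ∃ m : List G, (∀ a ∈ m, a ∈ A) ∧ m.length = p.length + s.length ∧
      m.prod = q.prod⁻¹ * (p ++ q ++ s).prod := by
  refine ⟨p.map (MulAut.conj q.prod⁻¹) ++ s, ?_, by simp, ?_⟩
  · simp only [List.mem_append, List.mem_map]
    rintro a (⟨b, hb, rfl⟩ | ha)
    · exact hconj _ b (hp b hb)
    · exact hs a ha
  · simp only [List.prod_append, ← map_list_prod, MulAut.conj_apply]
    group

theorem leA_prod_and_mem_redA_of_append_mem_redA (hconj : ConjClosed A) {c : G}
    {p q s : List G} (h : p ++ q ++ s ∈ RedA A c) :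
    leA A q.prod c ∧ q ∈ RedA A q.prod := by
  obtain ⟨hA, rfl, hlen⟩ := h
  simp only [List.mem_append, or_imp, forall_and] at hA
  obtain ⟨⟨hpA, hqA⟩, hsA⟩ := hA
  obtain ⟨m, hmA, hmlen, hmprod⟩ := exists_length_eq_prod_eq_inv_prod_mul hconj hpA hsA q
  have hq := lenA_prod_le_length hqA
  have hm := lenA_prod_le_length hmA
  have hsplit := lenA_prod_mul_prod_le hqA hmA
  rw [hmprod, mul_inv_cancel_left] at hsplit
  rw [hmprod] at hm
  simp only [List.length_append] at hlen
  exact ⟨by unfold leA; omega, hqA, rfl, by omega⟩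

end Factorizations

section Hurwitz

lemma HurwitzMove.append_append {u v : List G} (h : HurwitzMove u v) (p s : List G) :
    HurwitzMove (p ++ u ++ s) (p ++ v ++ s) := by
  obtain ⟨q, t, a, b, rfl, rfl⟩ := h
  exact ⟨p ++ q, t ++ s, a, b, by simp, by simp⟩

lemma eqvGen_hurwitzMove_append_append {u v : List G} (h : Relation.EqvGen HurwitzMove u v)
    (p s : List G) : Relation.EqvGen HurwitzMove (p ++ u ++ s) (p ++ v ++ s) := by
  induction h with
  | rel x y h => exact .rel _ _ (h.append_append p s)
  | refl x => exact .refl _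
  | symm x y _ ih => exact .symm _ _ ih
  | trans x y z _ _ ih₁ ih₂ => exact .trans _ _ _ ih₁ ih₂

theorem eqvGen_hurwitzMove_of_chainAdj {A : Set G} (hconj : ConjClosed A) {c : G}
    (hloc : ∀ g : G, leA A g c → lenA A g = 2 →
      ∀ l ∈ RedA A g, ∀ m ∈ RedA A g, Relation.EqvGen HurwitzMove l m)
    {u v : List G} (hu : u ∈ RedA A c) (hv : v ∈ RedA A c) (huv : ChainAdj u v) :
    Relation.EqvGen HurwitzMove u v := by
  obtain ⟨-, p, s, a, b, a', b', rfl, rfl, hab⟩ := huv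
  have hu' : p ++ [a, b] ++ s ∈ RedA A c := by simpa using hu
  have hv' : p ++ [a', b'] ++ s ∈ RedA A c := by simpa using hv
  obtain ⟨hle, hred⟩ := leA_prod_and_mem_redA_of_append_mem_redA hconj hu'
  obtain ⟨-, hred'⟩ := leA_prod_and_mem_redA_of_append_mem_redA hconj hv'
  have hprod : [a', b'].prod = [a, b].prod := by simpa using hab.symm
  rw [hprod] at hred'
  have hlen : lenA A [a, b].prod = 2 := hred.2.2.symm
  simpa using eqvGen_hurwitzMove_append_append (hloc _ hle hlen _ hred _ hred') p s

end Hurwitz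

theorem hurwitz_transitive_of_chain_connected_locally_hurwitz_general (A : Set G)
    (hconj : ConjClosed A) (c : G)
    (hchain : ∀ l ∈ RedA A c, ∀ m ∈ RedA A c,
      Relation.ReflTransGen
        (fun u v : List G => u ∈ RedA A c ∧ v ∈ RedA A c ∧ ChainAdj u v) l m)
    (hloc : ∀ g : G, leA A g c → lenA A g = 2 →
      ∀ l ∈ RedA A g, ∀ m ∈ RedA A g, Relation.EqvGen HurwitzMove l m) :
    ∀ l ∈ RedA A c, ∀ m ∈ RedA A c, Relation.EqvGen HurwitzMove l m := by
  intro l hl m hm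
  refine Relation.EqvGen.eqvGen_le ?_ _ _
    (Relation.EqvGen.reflTransGen_le_eqvGen _ _ _ (hchain l hl m hm))
  rintro u v ⟨hu, hv, huv⟩
  exact eqvGen_hurwitzMove_of_chainAdj hconj hloc hu hv huv

theorem hurwitz_transitive_of_chain_connected_locally_hurwitz (A : Set G)
    (hgen : GeneratesM A) (hconj : ConjClosed A) (c : G) (n : ℕ)
    (hn : lenA A c = n) (hfin : (RedA A c).Finite)
    (hchain : ∀ l ∈ RedA A c, ∀ m ∈ RedA A c,
      Relation.ReflTransGen
        (fun u v : List G => u ∈ RedA A c ∧ v ∈ RedA A c ∧ ChainAdj u v) l m)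
    (hloc : ∀ g : G, leA A g c → lenA A g = 2 →
      ∀ l ∈ RedA A g, ∀ m ∈ RedA A g, Relation.EqvGen HurwitzMove l m) :
    ∀ l ∈ RedA A c, ∀ m ∈ RedA A c, Relation.EqvGen HurwitzMove l m :=
  hurwitz_transitive_of_chain_connected_locally_hurwitz_general A hconj c hchain hloc
end
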